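/- There exists a constant C = C(n) > 0 such that for every u ∈ P⁺₁(0,M), every point x⁰ ∈ closure(Ω(u)) with u(x⁰) < 0, and every r > 0 with B(x⁰,r) ⊂ B⁺₁, one has sup_{B(x⁰,r)} u ≥ u(x⁰) + C r². -/

import Mathlib

open Metric Set MeasureTheory Filter RealInnerProductSpace

noncomputable section

/-- The (coordinate-wise) Laplacian `Δφ(x) = Σᵢ ∂²φ/∂xᵢ²(x)`. -/
def lap {n : ℕ} (φ : EuclideanSpace ℝ (Fin n) → ℝ) (x : EuclideanSpace ℝ (Fin n)) : ℝ :=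
  ∑ i, fderiv ℝ (fun y => fderiv ℝ φ y (EuclideanSpace.single i 1)) x (EuclideanSpace.single i 1)

/-- The open half space `ℝⁿ₊ = {x : x₁ > 0}`. -/
def Hplane (n : ℕ) [NeZero n] : Set (EuclideanSpace ℝ (Fin n)) := {x | 0 < x 0}

/-- The hyperplane `Π = {x : x₁ = 0}`. -/
def PiHyp (n : ℕ) [NeZero n] : Set (EuclideanSpace ℝ (Fin n)) := {x | x 0 = 0}

/-- The open half ball `B⁺₁ = B₁ ∩ {x₁ > 0}`. -/
def BplusUnit (n : ℕ) [NeZero n] : Set (EuclideanSpace ℝ (Fin n)) :=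
  Metric.ball 0 1 ∩ Hplane n

/-- The domain `B⁺₁ ∪ Π₁` (half ball together with the flat part of its boundary). -/
def DomUnit (n : ℕ) [NeZero n] : Set (EuclideanSpace ℝ (Fin n)) :=
  BplusUnit n ∪ (PiHyp n ∩ Metric.ball 0 1)

/-- `Ω(u) = {x ∈ B⁺₁ : ∇u(x) ≠ 0}`, described via the gradient function `du`. -/
def OmRegion {n : ℕ} [NeZero n]
    (du : EuclideanSpace ℝ (Fin n) → EuclideanSpace ℝ (Fin n)) :
    Set (EuclideanSpace ℝ (Fin n)) := BplusUnit n ∩ {x | du x ≠ 0}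

/-- The free boundary `Γ(u) = {x : ∇u(x) = 0} ∩ ∂Ω(u)`. -/
def FreeBdry {n : ℕ} [NeZero n]
    (du : EuclideanSpace ℝ (Fin n) → EuclideanSpace ℝ (Fin n)) :
    Set (EuclideanSpace ℝ (Fin n)) := {x | du x = 0} ∩ frontier (OmRegion du)

/-- `u ∈ P⁺₁(M)`: `u` is `C¹` on `B⁺₁ ∪ Π₁` with gradient `du` continuous up to the
flat boundary, `|u| ≤ M` on `B⁺₁`, `u = 0` on `Π₁`, and `Δu = χ_{Ω(u)}` in `B⁺₁`
in the sense of distributions. -/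
def PPlusOne {n : ℕ} [NeZero n] (M : ℝ) (u : EuclideanSpace ℝ (Fin n) → ℝ)
    (du : EuclideanSpace ℝ (Fin n) → EuclideanSpace ℝ (Fin n)) : Prop :=
  (∀ x ∈ DomUnit n, HasGradientWithinAt u (du x) (DomUnit n) x) ∧
  ContinuousOn du (DomUnit n) ∧
  (∀ x ∈ BplusUnit n, |u x| ≤ M) ∧
  (∀ x ∈ PiHyp n ∩ Metric.ball 0 1, u x = 0) ∧
  (∀ φ : EuclideanSpace ℝ (Fin n) → ℝ, ContDiff ℝ (⊤ : ℕ∞) φ →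
    tsupport φ ⊆ BplusUnit n →
    ∫ x in BplusUnit n, u x * lap φ x = ∫ x in OmRegion du, φ x)

/- ======================================================================
   Auxiliary material for the proof of `stmt_3`.
   ====================================================================== -/

open scoped Convolution

namespace Nondeg

lemma one_le_top' : (1 : WithTop ℕ∞) ≤ ((⊤:ℕ∞) : WithTop ℕ∞) := by exact_mod_cast le_top

lemma top_add_one' : ((⊤:ℕ∞) : WithTop ℕ∞) + 1 ≤ ((⊤:ℕ∞) : WithTop ℕ∞) := by
  have : ((⊤:ℕ∞) : WithTop ℕ∞) + 1 = ((⊤:ℕ∞) : WithTop ℕ∞) := by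
    exact_mod_cast (by simp : (⊤ : ℕ∞) + 1 = ⊤)
  exact this.le

lemma top_ne_zero' : ((⊤:ℕ∞) : WithTop ℕ∞) ≠ 0 := ne_of_gt (lt_of_lt_of_le zero_lt_one one_le_top')

variable {n : ℕ}

lemma contDiff_fderiv_apply {g : EuclideanSpace ℝ (Fin n) → ℝ}
    (hg : ContDiff ℝ (⊤:ℕ∞) g) (d : EuclideanSpace ℝ (Fin n)) :
    ContDiff ℝ (⊤:ℕ∞) (fun x => fderiv ℝ g x d) :=
  (ContinuousLinearMap.apply ℝ ℝ d).contDiff.comp (hg.fderiv_right top_add_one')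

lemma hasCompactSupport_fderiv_apply {g : EuclideanSpace ℝ (Fin n) → ℝ}
    (hcg : HasCompactSupport g) (d : EuclideanSpace ℝ (Fin n)) :
    HasCompactSupport (fun x => fderiv ℝ g x d) := by
  have := (hcg.fderiv ℝ).comp_left (g := fun T : EuclideanSpace ℝ (Fin n) →L[ℝ] ℝ => T d)
    (by simp)
  exact this

lemma lap_eq_zero_of_not_mem_tsupport {φ : EuclideanSpace ℝ (Fin n) → ℝ}
    {x : EuclideanSpace ℝ (Fin n)} (hx : x ∉ tsupport φ) : lap φ x = 0 := by
  have hopen : IsOpen (tsupport φ)ᶜ := (isClosed_tsupport φ).isOpen_compl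
  have hev : ∀ᶠ y in nhds x, y ∉ tsupport φ := hopen.mem_nhds hx
  unfold lap
  refine Finset.sum_eq_zero fun i _ => ?_
  have h1 : (fun y => fderiv ℝ φ y (EuclideanSpace.single i 1)) =ᶠ[nhds x]
      (fun _ => (0:ℝ)) := by
    filter_upwards [hev] with y hy
    have h2 : φ =ᶠ[nhds y] (fun _ => (0:ℝ)) := notMem_tsupport_iff_eventuallyEq.1 hy
    rw [h2.fderiv_eq]
    simp
  rw [h1.fderiv_eq]
  simp

lemma fderiv_comp_const_sub {g : EuclideanSpace ℝ (Fin n) → ℝ} (hg : ContDiff ℝ (⊤:ℕ∞) g)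
    (y t d : EuclideanSpace ℝ (Fin n)) :
    fderiv ℝ (fun s => g (y - s)) t d = - fderiv ℝ g (y - t) d := by
  have hA : HasFDerivAt (fun s : EuclideanSpace ℝ (Fin n) => y - s)
      (-(ContinuousLinearMap.id ℝ _)) t := (hasFDerivAt_id t).const_sub y
  have hgd : HasFDerivAt g (fderiv ℝ g (y - t)) (y - t) :=
    (hg.differentiable top_ne_zero' (y - t)).hasFDerivAt
  have hc : HasFDerivAt (fun s => g (y - s))
      ((fderiv ℝ g (y - t)).comp (-(ContinuousLinearMap.id ℝ _))) t := hgd.comp t hA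
  rw [hc.fderiv]
  simp

lemma lap_comp_const_sub {g : EuclideanSpace ℝ (Fin n) → ℝ} (hg : ContDiff ℝ (⊤:ℕ∞) g)
    (y x : EuclideanSpace ℝ (Fin n)) :
    lap (fun s => g (y - s)) x = lap g (y - x) := by
  unfold lap
  refine Finset.sum_congr rfl fun i _ => ?_
  set d := EuclideanSpace.single i (1:ℝ) with hd
  set F := fun w => fderiv ℝ g w d with hF
  have hFc : ContDiff ℝ (⊤:ℕ∞) F := contDiff_fderiv_apply hg d
  have h1 : (fun t => fderiv ℝ (fun s => g (y - s)) t d) = fun t => - F (y - t) := by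
    funext t; exact fderiv_comp_const_sub hg y t d
  rw [h1]
  have h2 : fderiv ℝ (fun t => - F (y - t)) x d = - fderiv ℝ (fun t => F (y - t)) x d := by
    rw [fderiv_fun_neg]; simp
  rw [h2, fderiv_comp_const_sub hFc y x d]
  simp

lemma second_deriv_nonpos_of_isLocalMax {g g' : ℝ → ℝ} {m : ℝ}
    (hg : ∀ t, HasDerivAt g (g' t) t) (hg' : HasDerivAt g' m 0)
    (hmax : IsLocalMax g 0) : m ≤ 0 := by
  by_contra hm
  push_neg at hm
  have h0 : g' 0 = 0 := by
    have h := hmax.deriv_eq_zero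
    rwa [(hg 0).deriv] at h
  have hslope : Tendsto (slope g' 0) (nhdsWithin 0 {(0:ℝ)}ᶜ) (nhds m) :=
    hasDerivAt_iff_tendsto_slope.1 hg'
  have hev : ∀ᶠ t in nhdsWithin 0 {(0:ℝ)}ᶜ, 0 < slope g' 0 t :=
    hslope.eventually (eventually_gt_nhds hm)
  rw [eventually_nhdsWithin_iff] at hev
  obtain ⟨δ, hδ0, hδ⟩ := Metric.eventually_nhds_iff.1 hev
  obtain ⟨ε, hε0, hε⟩ := Metric.eventually_nhds_iff.1 hmax
  set b := min δ ε / 2 with hb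
  have hb0 : 0 < b := by positivity
  have hbδ : b < δ := by
    have := min_le_left δ ε; simp only [hb]; linarith
  have hbε : b < ε := by
    have := min_le_right δ ε; simp only [hb]; linarith
  have hmono : StrictMonoOn g (Icc 0 b) := by
    refine strictMonoOn_of_deriv_pos (convex_Icc 0 b)
      (fun t _ => (hg t).continuousAt.continuousWithinAt) (fun t ht => ?_)
    rw [interior_Icc] at ht
    rw [(hg t).deriv]
    have hts : 0 < slope g' 0 t := by
      refine hδ (y := t) ?_ ?_
      · rw [Real.dist_eq, sub_zero, abs_of_pos ht.1]; linarith [ht.2]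
      · simp only [Set.mem_compl_iff, Set.mem_singleton_iff]
        exact ne_of_gt ht.1
    rw [slope_def_field, h0] at hts
    have h3 : 0 < (g' t - 0) / (t - 0) * t := mul_pos hts ht.1
    rw [sub_zero, sub_zero, div_mul_cancel₀ _ (ne_of_gt ht.1)] at h3
    exact h3
  have h1 : g b ≤ g 0 := by
    refine hε ?_
    rw [Real.dist_eq, sub_zero, abs_of_pos hb0]; exact hbε
  have h2 : g 0 < g b := hmono (left_mem_Icc.2 hb0.le) (right_mem_Icc.2 hb0.le) hb0
  linarith

lemma lap_nonpos_of_isLocalMax {V : EuclideanSpace ℝ (Fin n) → ℝ}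
    (hV : ContDiff ℝ (⊤:ℕ∞) V) {y : EuclideanSpace ℝ (Fin n)}
    (hmax : IsLocalMax V y) : lap V y ≤ 0 := by
  unfold lap
  refine Finset.sum_nonpos fun i _ => ?_
  set d := EuclideanSpace.single i (1:ℝ) with hd
  set F := fun x => fderiv ℝ V x d with hF
  have hFc : ContDiff ℝ (⊤:ℕ∞) F := contDiff_fderiv_apply hV d
  have hline : ∀ t : ℝ, HasDerivAt (fun t : ℝ => y + t • d) d t := by
    intro t
    simpa using ((hasDerivAt_id t).smul_const d).const_add y
  have hgd : ∀ t : ℝ, HasDerivAt (fun t : ℝ => V (y + t • d)) (F (y + t • d)) t := by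
    intro t
    have := ((hV.differentiable top_ne_zero' (y + t • d)).hasFDerivAt).comp_hasDerivAt t (hline t)
    exact this
  have hg' : HasDerivAt (fun t : ℝ => F (y + t • d)) (fderiv ℝ F y d) 0 := by
    have h := ((hFc.differentiable top_ne_zero' (y + (0:ℝ) • d)).hasFDerivAt).comp_hasDerivAt
      (0:ℝ) (hline 0)
    simp only [zero_smul, add_zero] at h
    exact h
  have hmax' : IsLocalMax (fun t : ℝ => V (y + t • d)) 0 := by
    have hc : ContinuousAt (fun t : ℝ => y + t • d) 0 := (hline 0).continuousAt
    have h0 : (fun t : ℝ => y + t • d) 0 = y := by simp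
    have := IsLocalMax.comp_continuous (f := V) (g := fun t : ℝ => y + t • d) (b := 0)
      (by simpa using hmax) hc
    exact this
  exact second_deriv_nonpos_of_isLocalMax hgd hg' hmax'

/-- the quadratic `|x-a|²` as an inner product -/
def qa (a x : EuclideanSpace ℝ (Fin n)) : ℝ := ⟪x - a, x - a⟫

lemma qa_eq (a x : EuclideanSpace ℝ (Fin n)) : qa a x = dist x a ^ 2 := by
  rw [qa, real_inner_self_eq_norm_sq, dist_eq_norm]

lemma qa_self (a : EuclideanSpace ℝ (Fin n)) : qa a a = 0 := by simp [qa]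

lemma qa_contDiff (a : EuclideanSpace ℝ (Fin n)) : ContDiff ℝ (⊤:ℕ∞) (qa a) :=
  (contDiff_id.sub contDiff_const).inner ℝ (contDiff_id.sub contDiff_const)

lemma hasFDerivAt_qa (a x : EuclideanSpace ℝ (Fin n)) :
    HasFDerivAt (qa a)
      ((fderivInnerCLM ℝ (x - a, x - a)).comp
        ((ContinuousLinearMap.id ℝ _).prod (ContinuousLinearMap.id ℝ _))) x :=
  ((hasFDerivAt_id x).sub_const a).inner ℝ ((hasFDerivAt_id x).sub_const a)

lemma fderiv_qa_apply (a x d : EuclideanSpace ℝ (Fin n)) :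
    fderiv ℝ (qa a) x d = 2 * ⟪x - a, d⟫ := by
  rw [(hasFDerivAt_qa a x).fderiv]
  simp only [ContinuousLinearMap.comp_apply, ContinuousLinearMap.prod_apply,
    ContinuousLinearMap.id_apply, fderivInnerCLM_apply]
  rw [real_inner_comm d (x - a)]
  ring

lemma lap_qa (a y : EuclideanSpace ℝ (Fin n)) : lap (qa a) y = 2 * n := by
  unfold lap
  have h1 : ∀ i : Fin n,
      fderiv ℝ (fun x => fderiv ℝ (qa a) x (EuclideanSpace.single i 1)) y
        (EuclideanSpace.single i 1) = 2 := by
    intro i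
    set d := EuclideanSpace.single i (1:ℝ) with hd
    have h2 : (fun x => fderiv ℝ (qa a) x d) = fun x => 2 * ⟪x - a, d⟫ := by
      funext x; exact fderiv_qa_apply a x d
    rw [h2]
    have h3 : HasFDerivAt (fun x : EuclideanSpace ℝ (Fin n) => ⟪x - a, d⟫)
        ((fderivInnerCLM ℝ ((y : EuclideanSpace ℝ (Fin n)) - a, d)).comp
          ((ContinuousLinearMap.id ℝ _).prod 0)) y :=
      ((hasFDerivAt_id y).sub_const a).inner ℝ (hasFDerivAt_const d y)
    rw [(h3.const_mul (2:ℝ)).fderiv]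
    have h5 : ⟪d, d⟫ = (1:ℝ) := by
      rw [hd, EuclideanSpace.inner_single_right]
      simp [EuclideanSpace.single_apply]
    simp only [ContinuousLinearMap.smul_apply, ContinuousLinearMap.comp_apply,
      ContinuousLinearMap.prod_apply, ContinuousLinearMap.id_apply,
      ContinuousLinearMap.zero_apply, fderivInnerCLM_apply, inner_zero_right, h5]
    simp
  calc (∑ i : Fin n, fderiv ℝ (fun x => fderiv ℝ (qa a) x (EuclideanSpace.single i 1)) y
        (EuclideanSpace.single i 1))
      = ∑ _i : Fin n, (2:ℝ) := Finset.sum_congr rfl (fun i _ => h1 i)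
    _ = 2 * n := by
        rw [Finset.sum_const, Finset.card_univ, Fintype.card_fin, nsmul_eq_mul]; ring

lemma lap_sub_sub_mul {F G H : EuclideanSpace ℝ (Fin n) → ℝ}
    (hF : ContDiff ℝ (⊤:ℕ∞) F) (hG : ContDiff ℝ (⊤:ℕ∞) G) (hH : ContDiff ℝ (⊤:ℕ∞) H)
    (a b : ℝ) (y : EuclideanSpace ℝ (Fin n)) :
    lap (fun x => F x - a * G x - b * H x) y = lap F y - a * lap G y - b * lap H y := by
  unfold lap
  have key : ∀ i : Fin n,
      fderiv ℝ (fun t => fderiv ℝ (fun x => F x - a * G x - b * H x) t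
          (EuclideanSpace.single i 1)) y (EuclideanSpace.single i 1)
      = fderiv ℝ (fun t => fderiv ℝ F t (EuclideanSpace.single i 1)) y
          (EuclideanSpace.single i 1)
        - a * fderiv ℝ (fun t => fderiv ℝ G t (EuclideanSpace.single i 1)) y
          (EuclideanSpace.single i 1)
        - b * fderiv ℝ (fun t => fderiv ℝ H t (EuclideanSpace.single i 1)) y
          (EuclideanSpace.single i 1) := by
    intro i
    set d := EuclideanSpace.single i (1:ℝ) with hd
    have h1 : (fun t => fderiv ℝ (fun x => F x - a * G x - b * H x) t d)
        = fun t => fderiv ℝ F t d - a * fderiv ℝ G t d - b * fderiv ℝ H t d := by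
      funext t
      have hF' := (hF.differentiable top_ne_zero' t).hasFDerivAt
      have hG' := (hG.differentiable top_ne_zero' t).hasFDerivAt
      have hH' := (hH.differentiable top_ne_zero' t).hasFDerivAt
      have hc : HasFDerivAt (fun x => F x - a * G x - b * H x)
          (fderiv ℝ F t - a • fderiv ℝ G t - b • fderiv ℝ H t) t :=
        (hF'.sub (hG'.const_mul a)).sub (hH'.const_mul b)
      rw [hc.fderiv]
      simp [smul_eq_mul]
    rw [h1]
    have hP := ((contDiff_fderiv_apply hF d).differentiable top_ne_zero' y).hasFDerivAt
    have hQ := ((contDiff_fderiv_apply hG d).differentiable top_ne_zero' y).hasFDerivAt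
    have hR := ((contDiff_fderiv_apply hH d).differentiable top_ne_zero' y).hasFDerivAt
    have hc2 : HasFDerivAt (fun t => fderiv ℝ F t d - a * fderiv ℝ G t d - b * fderiv ℝ H t d)
        (fderiv ℝ (fun t => fderiv ℝ F t d) y - a • fderiv ℝ (fun t => fderiv ℝ G t d) y
          - b • fderiv ℝ (fun t => fderiv ℝ H t d) y) y :=
      (hP.sub (hQ.const_mul a)).sub (hR.const_mul b)
    rw [hc2.fderiv]
    simp [smul_eq_mul]
  calc (∑ i : Fin n, fderiv ℝ (fun t => fderiv ℝ (fun x => F x - a * G x - b * H x) t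
        (EuclideanSpace.single i 1)) y (EuclideanSpace.single i 1))
      = ∑ i : Fin n, (fderiv ℝ (fun t => fderiv ℝ F t (EuclideanSpace.single i 1)) y
          (EuclideanSpace.single i 1)
        - a * fderiv ℝ (fun t => fderiv ℝ G t (EuclideanSpace.single i 1)) y
          (EuclideanSpace.single i 1)
        - b * fderiv ℝ (fun t => fderiv ℝ H t (EuclideanSpace.single i 1)) y
          (EuclideanSpace.single i 1)) := Finset.sum_congr rfl (fun i _ => key i)
    _ = _ := by
        rw [Finset.sum_sub_distrib, Finset.sum_sub_distrib, ← Finset.mul_sum, ← Finset.mul_sum]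

lemma fderiv_convolution_apply {f g : EuclideanSpace ℝ (Fin n) → ℝ}
    (hf : LocallyIntegrable f volume) (hcg : HasCompactSupport g)
    (hg : ContDiff ℝ (⊤:ℕ∞) g) (d : EuclideanSpace ℝ (Fin n))
    (x : EuclideanSpace ℝ (Fin n)) :
    fderiv ℝ (f ⋆[ContinuousLinearMap.lsmul ℝ ℝ, volume] g) x d
      = (f ⋆[ContinuousLinearMap.lsmul ℝ ℝ, volume] (fun w => fderiv ℝ g w d)) x := by
  rw [(hcg.hasFDerivAt_convolution_right (ContinuousLinearMap.lsmul ℝ ℝ) hf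
    (hg.of_le one_le_top') x).fderiv]
  exact convolution_precompR_apply (ContinuousLinearMap.lsmul ℝ ℝ) hf (hcg.fderiv ℝ)
    (hg.continuous_fderiv top_ne_zero') x d

lemma lap_convolution {f g : EuclideanSpace ℝ (Fin n) → ℝ}
    (hf : Integrable f volume) (hcg : HasCompactSupport g) (hg : ContDiff ℝ (⊤:ℕ∞) g)
    (y : EuclideanSpace ℝ (Fin n)) :
    lap (f ⋆[ContinuousLinearMap.lsmul ℝ ℝ, volume] g) y
      = ∫ t, f t * lap g (y - t) := by
  have hfl := hf.locallyIntegrable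
  unfold lap
  have key : ∀ i : Fin n,
      fderiv ℝ (fun t => fderiv ℝ (f ⋆[ContinuousLinearMap.lsmul ℝ ℝ, volume] g) t
          (EuclideanSpace.single i 1)) y (EuclideanSpace.single i 1)
      = (f ⋆[ContinuousLinearMap.lsmul ℝ ℝ, volume]
          (fun w => fderiv ℝ (fun w' => fderiv ℝ g w' (EuclideanSpace.single i 1)) w
            (EuclideanSpace.single i 1))) y := by
    intro i
    set d := EuclideanSpace.single i (1:ℝ) with hd
    have h1 : (fun t => fderiv ℝ (f ⋆[ContinuousLinearMap.lsmul ℝ ℝ, volume] g) t d)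
        = (f ⋆[ContinuousLinearMap.lsmul ℝ ℝ, volume] (fun w => fderiv ℝ g w d)) := by
      funext t; exact fderiv_convolution_apply hfl hcg hg d t
    rw [h1]
    exact fderiv_convolution_apply hfl (hasCompactSupport_fderiv_apply hcg d)
      (contDiff_fderiv_apply hg d) d y
  have hc2 : ∀ i : Fin n, HasCompactSupport (fun w =>
      fderiv ℝ (fun w' => fderiv ℝ g w' (EuclideanSpace.single i (1:ℝ))) w
        (EuclideanSpace.single i 1)) := fun i =>
    hasCompactSupport_fderiv_apply (hasCompactSupport_fderiv_apply hcg _) _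
  have hs2 : ∀ i : Fin n, Continuous (fun w =>
      fderiv ℝ (fun w' => fderiv ℝ g w' (EuclideanSpace.single i (1:ℝ))) w
        (EuclideanSpace.single i 1)) := fun i =>
    (contDiff_fderiv_apply (contDiff_fderiv_apply hg _) _).continuous
  have hint : ∀ i ∈ Finset.univ, Integrable (fun t => f t *
      fderiv ℝ (fun w' => fderiv ℝ g w' (EuclideanSpace.single i (1:ℝ))) (y - t)
        (EuclideanSpace.single i 1)) volume := by
    intro i _
    have h := ((hc2 i).convolutionExists_right (ContinuousLinearMap.lsmul ℝ ℝ) hfl (hs2 i)) y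
    simpa [ConvolutionExistsAt, ContinuousLinearMap.lsmul_apply, smul_eq_mul] using h
  calc (∑ i : Fin n, fderiv ℝ
        (fun t => fderiv ℝ (f ⋆[ContinuousLinearMap.lsmul ℝ ℝ, volume] g) t
          (EuclideanSpace.single i 1)) y (EuclideanSpace.single i 1))
      = ∑ i : Fin n, (f ⋆[ContinuousLinearMap.lsmul ℝ ℝ, volume]
          (fun w => fderiv ℝ (fun w' => fderiv ℝ g w' (EuclideanSpace.single i 1)) w
            (EuclideanSpace.single i 1))) y := Finset.sum_congr rfl (fun i _ => key i)
    _ = ∑ i : Fin n, ∫ t, f t *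
          fderiv ℝ (fun w' => fderiv ℝ g w' (EuclideanSpace.single i (1:ℝ))) (y - t)
            (EuclideanSpace.single i 1) := by
        refine Finset.sum_congr rfl (fun i _ => ?_)
        rw [convolution_def]
        simp [ContinuousLinearMap.lsmul_apply, smul_eq_mul]
    _ = ∫ t, ∑ i : Fin n, f t *
          fderiv ℝ (fun w' => fderiv ℝ g w' (EuclideanSpace.single i (1:ℝ))) (y - t)
            (EuclideanSpace.single i 1) := (integral_finset_sum Finset.univ hint).symm
    _ = ∫ t, f t * lap g (y - t) := by
        refine integral_congr_ae (Eventually.of_forall fun t => ?_)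
        simp only [lap, Finset.mul_sum]

lemma lsmul_flip : (ContinuousLinearMap.lsmul ℝ ℝ).flip = ContinuousLinearMap.lsmul ℝ ℝ := by
  ext
  simp [mul_comm]

lemma conv_comm' (f g : EuclideanSpace ℝ (Fin n) → ℝ) :
    f ⋆[ContinuousLinearMap.lsmul ℝ ℝ, volume] g
      = g ⋆[ContinuousLinearMap.lsmul ℝ ℝ, volume] f := by
  calc f ⋆[ContinuousLinearMap.lsmul ℝ ℝ, volume] g
      = g ⋆[(ContinuousLinearMap.lsmul ℝ ℝ).flip, volume] f :=
        (convolution_flip (ContinuousLinearMap.lsmul ℝ ℝ)).symm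
    _ = g ⋆[ContinuousLinearMap.lsmul ℝ ℝ, volume] f := by rw [lsmul_flip]

lemma setIntegral_eq_of_zero_off {A B : Set (EuclideanSpace ℝ (Fin n))}
    {h : EuclideanSpace ℝ (Fin n) → ℝ} (hAB : A ⊆ B) (hz : ∀ x ∉ A, h x = 0) :
    ∫ x in B, h x = ∫ x in A, h x := by
  rw [setIntegral_eq_integral_of_forall_compl_eq_zero
    (fun x hx => hz x (fun hA => hx (hAB hA))),
    setIntegral_eq_integral_of_forall_compl_eq_zero hz]

variable [NeZero n]

lemma isOpen_Bplus : IsOpen (BplusUnit n) := by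
  refine Metric.isOpen_ball.inter ?_
  have h : Hplane n = (EuclideanSpace.proj (0 : Fin n) :
      EuclideanSpace ℝ (Fin n) →L[ℝ] ℝ) ⁻¹' (Ioi 0) := rfl
  rw [h]
  exact isOpen_Ioi.preimage (EuclideanSpace.proj (0 : Fin n)).continuous

lemma Bplus_subset_Dom : BplusUnit n ⊆ DomUnit n := subset_union_left

lemma isOpen_Om {du : EuclideanSpace ℝ (Fin n) → EuclideanSpace ℝ (Fin n)}
    (hdu : ContinuousOn du (DomUnit n)) : IsOpen (OmRegion du) := by
  rw [isOpen_iff_mem_nhds]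
  rintro x ⟨hxB, hxne⟩
  have hnB : BplusUnit n ∈ nhds x := isOpen_Bplus.mem_nhds hxB
  have hx : ContinuousAt du x := hdu.continuousAt (Filter.mem_of_superset hnB Bplus_subset_Dom)
  have h1 : {w | du w ≠ 0} ∈ nhds x :=
    hx.preimage_mem_nhds (isOpen_compl_singleton.mem_nhds hxne)
  exact Filter.inter_mem hnB h1

lemma lap_conv_eq_one {M : ℝ} {u : EuclideanSpace ℝ (Fin n) → ℝ}
    {du : EuclideanSpace ℝ (Fin n) → EuclideanSpace ℝ (Fin n)} (hP : PPlusOne M u du)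
    {O : Set (EuclideanSpace ℝ (Fin n))} (hOop : IsOpen O) (hOsub : O ⊆ OmRegion du)
    (hInt : Integrable (O.indicator u) volume)
    (ρb : ContDiffBump (0 : EuclideanSpace ℝ (Fin n)))
    {y : EuclideanSpace ℝ (Fin n)} (hy : closedBall y ρb.rOut ⊆ O) :
    lap ((O.indicator u) ⋆[ContinuousLinearMap.lsmul ℝ ℝ, volume] ρb.normed volume) y = 1 := by
  obtain ⟨h1, h2, h3, h4, h5⟩ := hP
  have hg : ContDiff ℝ (⊤:ℕ∞) (ρb.normed volume) := ρb.contDiff_normed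
  have hcg : HasCompactSupport (ρb.normed volume) := ρb.hasCompactSupport_normed
  rw [lap_convolution hInt hcg hg y]
  set φy : EuclideanSpace ℝ (Fin n) → ℝ := fun t => ρb.normed volume (y - t) with hφy
  have hφs : ContDiff ℝ (⊤:ℕ∞) φy := hg.comp (contDiff_const.sub contDiff_id)
  have hφsupp : tsupport φy ⊆ closedBall y ρb.rOut := by
    have hsupp : Function.support φy ⊆ ball y ρb.rOut := by
      intro t ht
      have h6 : y - t ∈ Function.support (ρb.normed volume) := ht
      rw [ρb.support_normed_eq] at h6
      rw [mem_ball] at h6 ⊢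
      rw [dist_eq_norm] at h6 ⊢
      simpa [norm_sub_rev] using h6
    exact (closure_mono hsupp).trans closure_ball_subset_closedBall
  have hlapφ : ∀ t, lap φy t = lap (ρb.normed volume) (y - t) := fun t =>
    lap_comp_const_sub hg y t
  have hOB : O ⊆ BplusUnit n := hOsub.trans inter_subset_left
  have e1 : (fun t => (O.indicator u) t * lap (ρb.normed volume) (y - t))
      = O.indicator (fun t => u t * lap φy t) := by
    funext t
    rw [← hlapφ]
    by_cases ht : t ∈ O
    · simp [Set.indicator_of_mem, ht]
    · simp [Set.indicator_of_notMem, ht]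
  rw [e1, integral_indicator hOop.measurableSet]
  have hz : ∀ t ∉ O, u t * lap φy t = 0 := fun t ht => by
    have h7 : t ∉ tsupport φy := fun hc => ht (hy (hφsupp hc))
    rw [lap_eq_zero_of_not_mem_tsupport h7, mul_zero]
  rw [← setIntegral_eq_of_zero_off hOB hz]
  rw [h5 φy hφs ((hφsupp.trans hy).trans hOB)]
  have hz2 : ∀ x ∉ OmRegion du, φy x = 0 := fun x hx =>
    image_eq_zero_of_notMem_tsupport (fun hc => hx (hOsub (hy (hφsupp hc))))
  rw [setIntegral_eq_integral_of_forall_compl_eq_zero hz2]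
  rw [hφy]
  rw [integral_sub_left_eq_self (ρb.normed volume) volume y]
  exact ρb.integral_normed

/-- The main quantitative lemma, for centers inside `Ω`. -/
lemma core {M : ℝ} {u : EuclideanSpace ℝ (Fin n) → ℝ}
    {du : EuclideanSpace ℝ (Fin n) → EuclideanSpace ℝ (Fin n)} (hP : PPlusOne M u du)
    {x0 : EuclideanSpace ℝ (Fin n)} (hx0 : x0 ∈ OmRegion du) {r ρ : ℝ}
    (hρ0 : 0 < ρ) (hρr : ρ < r) (hball : ball x0 r ⊆ BplusUnit n) :
    u x0 + (1/(4*(n:ℝ))) * ρ^2 ≤ sSup (u '' ball x0 r) := by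
  have hn0 : 0 < (n:ℝ) := by exact_mod_cast Nat.pos_of_ne_zero (NeZero.ne n)
  obtain ⟨h1, h2, h3, h4, h5⟩ := hP
  set c : ℝ := 1/(4*(n:ℝ)) with hc
  have hc0 : 0 < c := by positivity
  set S := sSup (u '' ball x0 r) with hS
  have hr0 : 0 < r := lt_trans hρ0 hρr
  have hucont : ContinuousOn u (DomUnit n) := fun x hx =>
    (h1 x hx).hasFDerivWithinAt.continuousWithinAt
  have hSb : ∀ x ∈ ball x0 r, u x ≤ S := by
    intro x hx
    refine le_csSup ⟨M, ?_⟩ (mem_image_of_mem u hx)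
    rintro w ⟨a, ha, rfl⟩
    exact le_trans (le_abs_self _) (h3 a (hball ha))
  set K := closedBall x0 ρ with hK
  have hKsub : K ⊆ ball x0 r := closedBall_subset_ball hρr
  have hKD : K ⊆ DomUnit n := fun x hx => Bplus_subset_Dom (hball (hKsub hx))
  set v : EuclideanSpace ℝ (Fin n) → ℝ := fun x => u x - c * qa x0 x with hv
  have hvcont : ContinuousOn v K :=
    (hucont.mono hKD).sub ((continuous_const.mul (qa_contDiff x0).continuous).continuousOn)
  obtain ⟨z, hzK, hzmax⟩ := (isCompact_closedBall x0 ρ).exists_isMaxOn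
    ⟨x0, mem_closedBall_self hρ0.le⟩ hvcont
  have hdz : dist z x0 ≤ ρ := mem_closedBall.1 hzK
  rcases lt_or_eq_of_le hdz with hint | hsph
  · -- interior maximum: impossible
    exfalso
    have hzB : z ∈ BplusUnit n := hball (hKsub hzK)
    have hloc : IsLocalMax v z :=
      hzmax.isLocalMax (Filter.mem_of_superset (isOpen_ball.mem_nhds (mem_ball.2 hint))
        ball_subset_closedBall)
    have hu' : HasFDerivAt u ((InnerProductSpace.toDual ℝ _) (du z)) z :=
      ((h1 z (Bplus_subset_Dom hzB)).hasFDerivWithinAt).hasFDerivAt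
        (Filter.mem_of_superset (isOpen_Bplus.mem_nhds hzB) Bplus_subset_Dom)
    have hv' : HasFDerivAt v ((InnerProductSpace.toDual ℝ _) (du z)
        - c • ((fderivInnerCLM ℝ (z - x0, z - x0)).comp
          ((ContinuousLinearMap.id ℝ _).prod (ContinuousLinearMap.id ℝ _)))) z :=
      hu'.sub ((hasFDerivAt_qa x0 z).const_mul c)
    have h0 := hloc.hasFDerivAt_eq_zero hv'
    have happ : ∀ w, ⟪du z, w⟫ = c * (⟪z - x0, w⟫ + ⟪w, z - x0⟫) := by
      intro w
      have := ContinuousLinearMap.ext_iff.1 h0 w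
      simp only [ContinuousLinearMap.sub_apply, ContinuousLinearMap.smul_apply,
        ContinuousLinearMap.comp_apply, ContinuousLinearMap.prod_apply,
        ContinuousLinearMap.id_apply, fderivInnerCLM_apply,
        InnerProductSpace.toDual_apply_apply, ContinuousLinearMap.zero_apply,
        smul_eq_mul] at this
      linarith
    have hduz : du z = (2*c) • (z - x0) := by
      set w := du z - (2*c) • (z - x0) with hw
      have hiz : ⟪w, w⟫ = (0:ℝ) := by
        have e1 : ⟪w, w⟫ = ⟪du z, w⟫ - (2*c) * ⟪z - x0, w⟫ := by
          rw [hw, inner_sub_left, real_inner_smul_left]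
        have e2 := happ w
        have e3 : ⟪w, z - x0⟫ = ⟪z - x0, w⟫ := real_inner_comm _ _
        rw [e1, e2, e3]; ring
      have := inner_self_eq_zero.1 hiz
      rw [hw] at this
      exact sub_eq_zero.1 this
    have hzOm : z ∈ OmRegion du := by
      rcases eq_or_ne z x0 with rfl | hne
      · exact hx0
      · refine ⟨hzB, ?_⟩
        rw [Set.mem_setOf_eq, hduz]
        exact smul_ne_zero (by positivity) (sub_ne_zero.2 hne)
    -- pick a small ball around z inside Ω ∩ ball x0 ρ
    have hop : IsOpen (OmRegion du ∩ ball x0 ρ) := (isOpen_Om h2).inter isOpen_ball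
    obtain ⟨ε, hε0, hεsub⟩ := Metric.isOpen_iff.1 hop z ⟨hzOm, mem_ball.2 hint⟩
    set s : ℝ := ε/5 with hs
    have hs0 : 0 < s := by positivity
    have hK2 : closedBall z (2*s) ⊆ OmRegion du ∩ ball x0 ρ := by
      intro w hw
      refine hεsub (mem_ball.2 ?_)
      have := mem_closedBall.1 hw
      linarith
    have hK2D : closedBall z (2*s) ⊆ DomUnit n := fun w hw =>
      Bplus_subset_Dom ((hK2 hw).1.1)
    -- uniform continuity
    set β : ℝ := 1/(8*(n:ℝ)) with hβ
    have hβ0 : 0 < β := by positivity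
    set η : ℝ := β * s^2 / 4 with hη
    have hη0 : 0 < η := by positivity
    have hUC := (isCompact_closedBall z (2*s)).uniformContinuousOn_of_continuous
      (hucont.mono hK2D)
    obtain ⟨dδ, hdδ0, hdδ⟩ := Metric.uniformContinuousOn_iff.1 hUC η hη0
    set τ : ℝ := min s (dδ/2) with hτ
    have hτ0 : 0 < τ := lt_min hs0 (by positivity)
    have hτs : τ ≤ s := min_le_left _ _
    set ρb : ContDiffBump (0 : EuclideanSpace ℝ (Fin n)) :=
      ⟨τ/2, τ, by positivity, by linarith⟩ with hρb
    have hρbOut : ρb.rOut = τ := rfl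
    set O := ball z (3*s) with hO
    have hOsub : O ⊆ OmRegion du := by
      intro w hw
      exact (hεsub (mem_ball.2 (by have := mem_ball.1 hw; linarith))).1
    have hOB : O ⊆ BplusUnit n := hOsub.trans inter_subset_left
    have hOD : O ⊆ DomUnit n := hOB.trans Bplus_subset_Dom
    -- integrability
    have hIO : IntegrableOn u O volume := by
      have hconst : IntegrableOn (fun _ => M) O volume :=
        integrableOn_const measure_ball_lt_top.ne
      refine Integrable.mono' hconst
        ((hucont.mono hOD).aestronglyMeasurable isOpen_ball.measurableSet) ?_
      refine (ae_restrict_iff' isOpen_ball.measurableSet).2 (Eventually.of_forall fun x hx => ?_)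
      rw [Real.norm_eq_abs]
      exact h3 x (hOB hx)
    have hInt : Integrable (O.indicator u) volume :=
      (integrable_indicator_iff isOpen_ball.measurableSet).2 hIO
    set conv := (O.indicator u) ⋆[ContinuousLinearMap.lsmul ℝ ℝ, volume] ρb.normed volume
      with hconv
    have hconvC : ContDiff ℝ (⊤:ℕ∞) conv :=
      ρb.hasCompactSupport_normed.contDiff_convolution_right
        (ContinuousLinearMap.lsmul ℝ ℝ) hInt.locallyIntegrable ρb.contDiff_normed
    have hconv1 : ∀ y ∈ closedBall z s, lap conv y = 1 := by
      intro y hy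
      refine lap_conv_eq_one ⟨h1, h2, h3, h4, h5⟩ isOpen_ball hOsub hInt ρb ?_
      intro w hw
      rw [mem_closedBall] at hw
      rw [hρbOut] at hw
      have h8 : dist y z ≤ s := mem_closedBall.1 hy
      refine mem_ball.2 ?_
      calc dist w z ≤ dist w y + dist y z := dist_triangle _ _ _
        _ ≤ τ + s := add_le_add hw h8
        _ ≤ 2*s := by linarith
        _ < 3*s := by linarith
    -- uniform approximation
    have happrox : ∀ y ∈ closedBall z s, |conv y - u y| ≤ η := by
      intro y hy
      have hyz : dist y z ≤ s := mem_closedBall.1 hy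
      have hyO : y ∈ O := mem_ball.2 (by linarith)
      have hy2 : y ∈ closedBall z (2*s) := mem_closedBall.2 (by linarith)
      have hd : ∀ x ∈ ball y ρb.rOut,
          dist ((O.indicator u) x) ((O.indicator u) y) ≤ η := by
        intro x hx
        have hxy : dist x y < τ := by rw [← hρbOut]; exact mem_ball.1 hx
        have hxz : dist x z < 2*s := by
          calc dist x z ≤ dist x y + dist y z := dist_triangle _ _ _
            _ < τ + s := by linarith
            _ ≤ 2*s := by linarith
        have hxO : x ∈ O := mem_ball.2 (by linarith)
        have hx2 : x ∈ closedBall z (2*s) := mem_closedBall.2 hxz.le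
        rw [Set.indicator_of_mem hxO, Set.indicator_of_mem hyO]
        refine le_of_lt (hdδ x hx2 y hy2 ?_)
        calc dist x y < τ := hxy
          _ ≤ dδ/2 := min_le_right _ _
          _ < dδ := by linarith
      have hest := ρb.dist_normed_convolution_le hInt.aestronglyMeasurable hd
      rw [← conv_comm'] at hest
      rw [Set.indicator_of_mem hyO] at hest
      rw [Real.dist_eq] at hest
      exact hest
    -- the comparison function W
    set W : EuclideanSpace ℝ (Fin n) → ℝ := fun x => conv x - c * qa x0 x - β * qa z x with hW
    have hWc : ContDiff ℝ (⊤:ℕ∞) W := by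
      rw [hW]
      exact (hconvC.sub (contDiff_const.mul (qa_contDiff x0))).sub
        (contDiff_const.mul (qa_contDiff z))
    have hlapW : ∀ y ∈ ball z s, lap W y = 1 - c * (2*n) - β * (2*n) := by
      intro y hy
      rw [hW, lap_sub_sub_mul hconvC (qa_contDiff x0) (qa_contDiff z) c β y]
      rw [hconv1 y (ball_subset_closedBall hy), lap_qa, lap_qa]
    have hlapWpos : (1:ℝ) - c * (2*n) - β * (2*n) = 1/4 := by
      rw [hc, hβ]
      field_simp
      ring
    obtain ⟨y, hyK, hymax⟩ := (isCompact_closedBall z s).exists_isMaxOn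
      ⟨z, mem_closedBall_self hs0.le⟩ hWc.continuous.continuousOn
    have hysph : dist y z = s := by
      by_contra hne
      have hyint : dist y z < s := lt_of_le_of_ne (mem_closedBall.1 hyK) hne
      have hlm : IsLocalMax W y :=
        hymax.isLocalMax (Filter.mem_of_superset (isOpen_ball.mem_nhds (mem_ball.2 hyint))
          ball_subset_closedBall)
      have := lap_nonpos_of_isLocalMax hWc hlm
      rw [hlapW y (mem_ball.2 hyint), hlapWpos] at this
      linarith
    -- contradiction with maximality of v at z
    have hWzy : W z ≤ W y := (isMaxOn_iff.1 hymax) z (mem_closedBall_self hs0.le)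
    have hay := happrox y hyK
    have haz := happrox z (mem_closedBall_self hs0.le)
    have hqys : qa z y = s^2 := by rw [qa_eq, hysph]
    have hqzz : qa z z = 0 := qa_self z
    have hyK' : y ∈ K := by
      have h9 : y ∈ closedBall z (2*s) := mem_closedBall.2 (by
        rw [hysph]; linarith)
      exact ball_subset_closedBall ((hK2 h9).2)
    have hvy : v y ≤ v z := (isMaxOn_iff.1 hzmax) y hyK'
    rw [hW] at hWzy
    simp only [hqys, hqzz, mul_zero, sub_zero] at hWzy
    have e1 := abs_le.1 hay
    have e2 := abs_le.1 haz
    have hvy' : u y - c * qa x0 y ≤ u z - c * qa x0 z := hvy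
    have hβs : 0 < β * s^2 := by positivity
    linarith [e1.1, e1.2, e2.1, e2.2, hWzy, hvy', hβs]
  · -- maximum on the sphere: the desired estimate
    have hvx0 : v x0 ≤ v z := (isMaxOn_iff.1 hzmax) x0 (mem_closedBall_self hρ0.le)
    rw [hv] at hvx0
    simp only [qa_self, mul_zero, sub_zero] at hvx0
    have hqz : qa x0 z = ρ^2 := by rw [qa_eq, ← hsph]
    rw [hqz] at hvx0
    have hzS : u z ≤ S := hSb z (hKsub hzK)
    linarith

end Nondeg

/-- Non-degeneracy (case `u(x⁰) < 0`): there is `C = C(n) > 0` such that for every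
`u ∈ P⁺₁(0,M)`, every `x⁰ ∈ closure(Ω(u))` with `u(x⁰) < 0` and every `r > 0` with
`B(x⁰,r) ⊂ B⁺₁` one has `sup_{B(x⁰,r)} u ≥ u(x⁰) + C r²`. -/
theorem stmt_3 {n : ℕ} [NeZero n] (hn : 2 ≤ n) :
    ∃ C : ℝ, 0 < C ∧
      ∀ (M : ℝ) (u : EuclideanSpace ℝ (Fin n) → ℝ)
        (du : EuclideanSpace ℝ (Fin n) → EuclideanSpace ℝ (Fin n)),
        PPlusOne M u du → 0 ∈ FreeBdry du →
        ∀ x0 ∈ closure (OmRegion du), u x0 < 0 →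
          ∀ r : ℝ, 0 < r → Metric.ball x0 r ⊆ BplusUnit n →
            u x0 + C * r ^ 2 ≤ sSup (u '' Metric.ball x0 r) := by
  have hn0 : 0 < (n:ℝ) := by
    have : 0 < n := lt_of_lt_of_le (by norm_num) hn
    exact_mod_cast this
  set c : ℝ := 1/(4*(n:ℝ)) with hc
  have hc0 : 0 < c := by positivity
  refine ⟨c, hc0, ?_⟩
  intro M u du hP hfb x0 hx0cl hneg r hr hball
  have hucont : ContinuousOn u (DomUnit n) := fun x hx =>
    (hP.1 x hx).hasFDerivWithinAt.continuousWithinAt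
  refine le_of_forall_pos_le_add ?_
  intro θ hθ
  have hx0B : x0 ∈ BplusUnit n := hball (mem_ball_self hr)
  have hcw : ContinuousWithinAt u (DomUnit n) x0 :=
    hucont x0 (Nondeg.Bplus_subset_Dom hx0B)
  obtain ⟨δ1, hδ10, hδ1⟩ := Metric.continuousWithinAt_iff.1 hcw (θ/2) (by linarith)
  have h8cr : 0 < 8*c*r + 1 := by positivity
  set ε : ℝ := min (min (δ1/2) (r/8)) (θ/(8*c*r+1)) with hε
  have hε0 : 0 < ε :=
    lt_min (lt_min (by linarith) (by linarith)) (div_pos hθ h8cr)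
  have hεδ1 : ε ≤ δ1/2 := le_trans (min_le_left _ _) (min_le_left _ _)
  have hεr : ε ≤ r/8 := le_trans (min_le_left _ _) (min_le_right _ _)
  have hεθ : ε ≤ θ/(8*c*r+1) := min_le_right _ _
  obtain ⟨x0', hx0'Om, hx0'd⟩ := Metric.mem_closure_iff.1 hx0cl ε hε0
  have hd' : dist x0' x0 < ε := by rw [dist_comm]; exact hx0'd
  have hball' : ball x0' (r - ε) ⊆ ball x0 r := by
    intro w hw
    rw [mem_ball] at hw ⊢
    calc dist w x0 ≤ dist w x0' + dist x0' x0 := dist_triangle _ _ _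
      _ < (r - ε) + ε := add_lt_add hw hd'
      _ = r := by ring
  have hρ0 : 0 < r - 2*ε := by linarith
  have hρr : r - 2*ε < r - ε := by linarith
  have hcore := Nondeg.core hP hx0'Om hρ0 hρr (hball'.trans hball)
  have hne : (u '' ball x0' (r-ε)).Nonempty :=
    ⟨u x0', mem_image_of_mem u (mem_ball_self (by linarith))⟩
  have hbdd : BddAbove (u '' ball x0 r) := by
    refine ⟨M, ?_⟩
    rintro w ⟨a, ha, rfl⟩
    exact le_trans (le_abs_self _) (hP.2.2.1 a (hball ha))
  have hmono : sSup (u '' ball x0' (r-ε)) ≤ sSup (u '' ball x0 r) :=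
    csSup_le_csSup hbdd hne (image_mono hball')
  have hx0'D : x0' ∈ DomUnit n := Nondeg.Bplus_subset_Dom hx0'Om.1
  have hu' : dist (u x0') (u x0) < θ/2 :=
    hδ1 hx0'D (lt_of_lt_of_le hd' (by linarith))
  rw [Real.dist_eq] at hu'
  have hu'2 := (abs_lt.1 hu').2
  have hu'1 := (abs_lt.1 hu').1
  -- c r² − c (r−2ε)² ≤ θ/2
  have hεle : ε * (8*c*r+1) ≤ θ := by
    rw [div_eq_mul_inv] at hεθ
    calc ε * (8*c*r+1) ≤ (θ * (8*c*r+1)⁻¹) * (8*c*r+1) := by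
          exact mul_le_mul_of_nonneg_right hεθ h8cr.le
      _ = θ := by field_simp
  have hcr : c * r^2 - c * (r-2*ε)^2 ≤ θ/2 := by
    nlinarith [mul_nonneg (mul_nonneg hc0.le hε0.le) hε0.le, hε0.le, hc0.le,
      mul_pos hc0 hr, mul_nonneg hc0.le (mul_nonneg hε0.le hε0.le)]
  linarith [hcore, hmono]

end
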